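/- Let Y be a smooth projective curve over an algebraically closed field K of characteristic p > 0, and let S be a locally free sheaf of degree 0 on Y. If there exist integers e' > e ≥ 0 such that the Frobenius pullbacks satisfy F^{e'*}(S) ≅ F^{e*}(S), then S is strongly semistable (i.e., F^{e*}(S) is semistable for every e ≥ 0). -/

import Mathlib

open CategoryTheory CategoryTheory.Limits

universe v u

variable {C : Type u} [Category.{v} C] [Abelian C]

/-- The slope `μ = deg / rk` of an object (a coherent sheaf on a curve). -/
noncomputable def sheafSlope (deg : C → ℤ) (rk : C → ℕ) (X : C) : ℚ :=
  (deg X : ℚ) / (rk X : ℚ)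

/-- Semistability: every nonzero subobject has slope at most the slope of `X`. -/
def SheafSemistable (deg : C → ℤ) (rk : C → ℕ) (X : C) : Prop :=
  ∀ (T : C) (f : T ⟶ X), Mono f → rk T ≠ 0 → sheafSlope deg rk T ≤ sheafSlope deg rk X

/-- The `e`-fold iterate of an endofunctor (the `e`-th Frobenius pullback). -/
def iterFunctor (Φ : C ⥤ C) : ℕ → (C ⥤ C)
  | 0 => 𝟭 C
  | e + 1 => iterFunctor Φ e ⋙ Φ

/-!
A subsheaf `T ⊆ Fⁿ*S` of positive slope pulls back to subsheaves `Fᵏ*T ⊆ Fⁿ⁺ᵏ*S` of slope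
`pᵏ μ(T) → ∞`. By periodicity, `Fⁿ⁺ᵏ*S ≅ Fⁿ⁺ᵉ*S` for infinitely many `k`, and the slopes of
subsheaves of the single sheaf `Fⁿ⁺ᵉ*S` are bounded. Hence `μ(T) ≤ 0 = μ(Fⁿ*S)`.
-/

open Filter

section Iterates

variable {D : Type*} [Category D] (Φ : D ⥤ D)

lemma iterFunctor_obj_add (m n : ℕ) (X : D) :
    (iterFunctor Φ n).obj ((iterFunctor Φ m).obj X) = (iterFunctor Φ (m + n)).obj X := by
  induction n with
  | zero => rfl
  | succ n ih => exact congrArg Φ.obj ih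

instance iterFunctor_preservesMonomorphisms [Φ.PreservesMonomorphisms] :
    ∀ n, (iterFunctor Φ n).PreservesMonomorphisms
  | 0 => inferInstanceAs (𝟭 D).PreservesMonomorphisms
  | n + 1 =>
    haveI := iterFunctor_preservesMonomorphisms n
    inferInstanceAs (iterFunctor Φ n ⋙ Φ).PreservesMonomorphisms

variable {Φ} {S : D} {e d : ℕ}

lemma nonempty_iso_iterFunctor_obj_add
    (hper : Nonempty ((iterFunctor Φ (e + d)).obj S ≅ (iterFunctor Φ e).obj S))
    {n : ℕ} (hn : e ≤ n) :
    Nonempty ((iterFunctor Φ (n + d)).obj S ≅ (iterFunctor Φ n).obj S) := by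
  obtain ⟨k, rfl⟩ := Nat.exists_eq_add_of_le hn
  obtain ⟨ι⟩ := hper
  rw [show e + k + d = e + d + k by omega, ← iterFunctor_obj_add Φ (e + d) k,
    ← iterFunctor_obj_add Φ e k]
  exact ⟨(iterFunctor Φ k).mapIso ι⟩

lemma nonempty_iso_iterFunctor_obj_add_mul
    (hper : Nonempty ((iterFunctor Φ (e + d)).obj S ≅ (iterFunctor Φ e).obj S))
    {n : ℕ} (hn : e ≤ n) (m : ℕ) :
    Nonempty ((iterFunctor Φ (n + m * d)).obj S ≅ (iterFunctor Φ n).obj S) := by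
  induction m with
  | zero => rw [zero_mul, add_zero]; exact ⟨Iso.refl _⟩
  | succ m ih =>
    obtain ⟨ι⟩ := nonempty_iso_iterFunctor_obj_add hper (n := n + m * d) (by omega)
    rw [show n + (m + 1) * d = n + m * d + d by ring]
    exact ih.map ι.trans

lemma frequently_nonempty_iso_iterFunctor_obj (hd : 0 < d)
    (hper : Nonempty ((iterFunctor Φ (e + d)).obj S ≅ (iterFunctor Φ e).obj S)) (n : ℕ) :
    ∃ᶠ k in atTop,
      Nonempty ((iterFunctor Φ k).obj ((iterFunctor Φ n).obj S) ≅ (iterFunctor Φ (n + e)).obj S) := by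
  refine frequently_atTop.2 fun a => ⟨e + a * d, by nlinarith, ?_⟩
  rw [iterFunctor_obj_add, ← add_assoc]
  exact nonempty_iso_iterFunctor_obj_add_mul hper (by omega) a

end Iterates

section Slopes

variable {D : Type*} [Category D] (deg : D → ℤ) (rk : D → ℕ) {Φ : D ⥤ D} {p : ℤ}

lemma deg_iterFunctor_obj (hΦ : ∀ X, deg (Φ.obj X) = p * deg X) (n : ℕ) (X : D) :
    deg ((iterFunctor Φ n).obj X) = p ^ n * deg X := by
  induction n with
  | zero => simp [iterFunctor]
  | succ n ih =>
    change deg (Φ.obj ((iterFunctor Φ n).obj X)) = _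
    rw [hΦ, ih, pow_succ]
    ring

lemma rk_iterFunctor_obj (hΦ : ∀ X, rk (Φ.obj X) = rk X) (n : ℕ) (X : D) :
    rk ((iterFunctor Φ n).obj X) = rk X := by
  induction n with
  | zero => rfl
  | succ n ih => exact (hΦ _).trans ih

lemma sheafSlope_iterFunctor_obj (hΦdeg : ∀ X, deg (Φ.obj X) = p * deg X)
    (hΦrk : ∀ X, rk (Φ.obj X) = rk X) (n : ℕ) (X : D) :
    sheafSlope deg rk ((iterFunctor Φ n).obj X) = (p : ℚ) ^ n * sheafSlope deg rk X := by
  simp only [sheafSlope, deg_iterFunctor_obj deg hΦdeg, rk_iterFunctor_obj rk hΦrk]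
  push_cast
  ring

lemma sheafSlope_nonpos_of_frequently_iso (hp : 1 < p)
    (hΦdeg : ∀ X, deg (Φ.obj X) = p * deg X) (hΦrk : ∀ X, rk (Φ.obj X) = rk X)
    [Φ.PreservesMonomorphisms] {X Y : D}
    (hY : ∃ M : ℚ, ∀ (T : D) (f : T ⟶ Y), Mono f → rk T ≠ 0 → sheafSlope deg rk T ≤ M)
    (hXY : ∃ᶠ k in atTop, Nonempty ((iterFunctor Φ k).obj X ≅ Y))
    {T : D} (f : T ⟶ X) (hf : Mono f) (hT : rk T ≠ 0) :
    sheafSlope deg rk T ≤ 0 := by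
  by_contra! hpos
  obtain ⟨M, hM⟩ := hY
  have hgrow : Tendsto (fun k : ℕ => (p : ℚ) ^ k * sheafSlope deg rk T) atTop atTop :=
    (tendsto_pow_atTop_atTop_of_one_lt (by exact_mod_cast hp)).atTop_mul_const hpos
  obtain ⟨k, ⟨ι⟩, hk⟩ := (hXY.and_eventually (hgrow.eventually_gt_atTop M)).exists
  have hbound := hM _ ((iterFunctor Φ k).map f ≫ ι.hom) inferInstance
    (by rwa [rk_iterFunctor_obj rk hΦrk])
  rw [sheafSlope_iterFunctor_obj deg rk hΦdeg hΦrk] at hbound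
  linarith

end Slopes

theorem frobenius_periodic_implies_strongly_semistable_general
    (deg : C → ℤ) (rk : C → ℕ) (p : ℕ) (hp : p.Prime)
    (Frob : C ⥤ C)
    (hFdeg : ∀ X : C, deg (Frob.obj X) = p * deg X)
    (hFrk : ∀ X : C, rk (Frob.obj X) = rk X)
    (hFmono : ∀ (X Y : C) (f : X ⟶ Y), Mono f → Mono (Frob.map f))
    (hbound : ∀ X : C, ∃ M : ℚ, ∀ (T : C) (f : T ⟶ X), Mono f → rk T ≠ 0 →
      sheafSlope deg rk T ≤ M)
    (S : C) (hdegS : deg S = 0)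
    (e e' : ℕ) (hee' : e < e')
    (hper : Nonempty ((iterFunctor Frob e').obj S ≅ (iterFunctor Frob e).obj S)) :
    ∀ e'' : ℕ, SheafSemistable deg rk ((iterFunctor Frob e'').obj S) := by
  have : Frob.PreservesMonomorphisms := ⟨fun f hf => hFmono _ _ f hf⟩
  obtain ⟨d, rfl⟩ := Nat.exists_eq_add_of_lt hee'
  intro n T f hf hrkT
  have hslope : sheafSlope deg rk ((iterFunctor Frob n).obj S) = 0 := by
    simp [sheafSlope, deg_iterFunctor_obj deg hFdeg, hdegS]
  rw [hslope]
  exact sheafSlope_nonpos_of_frequently_iso deg rk (by exact_mod_cast hp.one_lt) hFdeg hFrk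
    (hbound _) (frequently_nonempty_iso_iterFunctor_obj d.succ_pos hper n) f hf hrkT

/-- **Frobenius-periodic bundles of degree zero are strongly semistable.**
Let `Y` be a smooth projective curve over an algebraically closed field of
characteristic `p > 0`, modelled by its category of coherent sheaves `C` with
degree and rank functions, and the Frobenius pullback `Frob` (exact, multiplying
degrees by `p` and preserving ranks; slopes of subsheaves of a fixed sheaf are
bounded above).  If `S` is locally free of degree `0` and
`F^{e'*}(S) ≅ F^{e*}(S)` for some `e' > e`, then `S` is strongly semistable:
all Frobenius pullbacks `F^{e''*}(S)` are semistable. -/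
theorem frobenius_periodic_implies_strongly_semistable
    (deg : C → ℤ) (rk : C → ℕ) (p : ℕ) (hp : p.Prime)
    (hiso : ∀ X Y : C, (X ≅ Y) → deg X = deg Y ∧ rk X = rk Y)
    (Frob : C ⥤ C)
    (hFdeg : ∀ X : C, deg (Frob.obj X) = p * deg X)
    (hFrk : ∀ X : C, rk (Frob.obj X) = rk X)
    (hFmono : ∀ (X Y : C) (f : X ⟶ Y), Mono f → Mono (Frob.map f))
    (hbound : ∀ X : C, ∃ M : ℚ, ∀ (T : C) (f : T ⟶ X), Mono f → rk T ≠ 0 →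
      sheafSlope deg rk T ≤ M)
    (S : C) (hrkS : rk S ≠ 0) (hdegS : deg S = 0)
    (e e' : ℕ) (hee' : e < e')
    (hper : Nonempty ((iterFunctor Frob e').obj S ≅ (iterFunctor Frob e).obj S)) :
    ∀ e'' : ℕ, SheafSemistable deg rk ((iterFunctor Frob e'').obj S) :=
  frobenius_periodic_implies_strongly_semistable_general deg rk p hp Frob hFdeg hFrk hFmono hbound S
    hdegS e e' hee' hper
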